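/- arXiv:1711.02984 — 5 statements merged into one kernel-verified Lean document; each statement's English description precedes it below -/
import Mathlib

section
/- Let $q$ be a nonzero complex number that is not a root of unity, $n \geq 1$, and let $w_1,\dots,w_n,z_1,\dots,z_n$ be generic parameters (all $z_i/z_j$ avoiding powers of $q$ for $i \neq j$). Then for every integer $l \geq 0$, $$\frac{(w_1^{-1}\cdots w_n^{-1}q^{-l+1};q)_l}{(q;q)_l} = \sum_{\gamma \in \mathbb{Z}_{\geq 0}^n,\ |\gamma|=l}\ \prod_{1\le i,j\le n} \frac{(q^{-\gamma_i+1}z_i/(z_j w_j);q)_{\gamma_i}}{(q^{\gamma_j-\gamma_i+1}z_i/z_j;q)_{\gamma_i}},$$ where $(x;q)_m = \prod_{k=0}^{m-1}(1-xq^k)$ is the $q$-Pochhammer symbol and $|\gamma| = \gamma_1+\cdots+\gamma_n$. -/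
set_option autoImplicit false
set_option linter.unusedVariables false
set_option maxHeartbeats 1000000
set_option linter.unusedSectionVars false

open Finset

/-- The q-Pochhammer symbol `(x;q)_m = ∏_{k=0}^{m-1} (1 - x qᵏ)`. -/
noncomputable def qPoch (q x : ℂ) (m : ℕ) : ℂ := ∏ k ∈ Finset.range m, (1 - x * q ^ k)

lemma qPoch_succ_left (q x : ℂ) (m : ℕ) :
    qPoch q x (m + 1) = (1 - x) * qPoch q (q * x) m := by
  unfold qPoch
  rw [Finset.prod_range_succ']
  simp only [pow_zero, mul_one]
  rw [mul_comm]
  congr 1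
  apply Finset.prod_congr rfl
  intro k _
  ring_nf

lemma qPoch_succ_right (q x : ℂ) (m : ℕ) :
    qPoch q x (m + 1) = qPoch q x m * (1 - x * q ^ m) := by
  unfold qPoch
  rw [Finset.prod_range_succ]

lemma qPoch_ne_zero (q x : ℂ) (m : ℕ) (h : ∀ k, k < m → x * q ^ k ≠ 1) :
    qPoch q x m ≠ 0 := by
  unfold qPoch
  rw [Finset.prod_ne_zero_iff]
  intro k hk
  exact sub_ne_zero_of_ne (Ne.symm (h k (Finset.mem_range.mp hk)))

/-- Milne's fundamental lemma, proved by Lagrange interpolation at `0`. -/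
lemma milne {n : ℕ} (x y : Fin n → ℂ) (hx0 : ∀ i, x i ≠ 0)
    (hxd : ∀ i j : Fin n, i ≠ j → x i ≠ x j) :
    ∑ k, (1 - y k) * ∏ j ∈ Finset.univ.erase k, (x k - y j * x j) / (x k - x j)
      = 1 - ∏ j, y j := by
  classical
  open Polynomial in
  rcases Nat.eq_zero_or_pos n with h0 | hpos
  · subst h0; simp
  have hinj : Set.InjOn x (Finset.univ : Finset (Fin n)) := by
    intro a _ b _ hab
    by_contra hne
    exact hxd a b hne hab
  set P : ℂ[X] := ∏ j, (X - C (y j * x j)) with hP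
  set Q : ℂ[X] := ∏ j, (X - C (x j)) with hQ
  have hPm : P.Monic := monic_prod_of_monic _ _ fun j _ => monic_X_sub_C _
  have hQm : Q.Monic := monic_prod_of_monic _ _ fun j _ => monic_X_sub_C _
  have hPd : P.natDegree = n := by
    rw [hP, natDegree_prod_of_monic _ _ fun j _ => monic_X_sub_C _]
    simp only [natDegree_X_sub_C, Finset.sum_const, Finset.card_univ,
      Fintype.card_fin, smul_eq_mul, mul_one]
  have hQd : Q.natDegree = n := by
    rw [hQ, natDegree_prod_of_monic _ _ fun j _ => monic_X_sub_C _]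
    simp only [natDegree_X_sub_C, Finset.sum_const, Finset.card_univ,
      Fintype.card_fin, smul_eq_mul, mul_one]
  have hdeg : (P - Q).degree < ((Finset.univ : Finset (Fin n)).card : ℕ) := by
    rw [Finset.card_univ, Fintype.card_fin]
    rcases eq_or_ne P Q with hPQ | hPQ
    · rw [hPQ, sub_self, degree_zero]
      exact WithBot.bot_lt_coe n
    · have h := Polynomial.degree_sub_lt (p := P) (q := Q)
        (by rw [degree_eq_natDegree hPm.ne_zero, degree_eq_natDegree hQm.ne_zero, hPd, hQd])
        hPm.ne_zero (by rw [hPm.leadingCoeff, hQm.leadingCoeff])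
      calc (P - Q).degree < P.degree := h
        _ = (n : ℕ) := by rw [degree_eq_natDegree hPm.ne_zero, hPd]
  have hint := Lagrange.eq_interpolate (f := P - Q) hinj hdeg
  have heval := congrArg (Polynomial.eval 0) hint
  rw [Lagrange.interpolate_apply] at heval
  simp only [eval_finset_sum, eval_mul, eval_C, Lagrange.basis, eval_prod,
    Lagrange.basisDivisor, eval_sub, eval_X, eval_C] at heval
  have hA : (∏ j, -x j) ≠ 0 := Finset.prod_ne_zero_iff.mpr fun j _ => neg_ne_zero.mpr (hx0 j)
  have hQx : ∀ i : Fin n, Q.eval (x i) = 0 := by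
    intro i
    rw [hQ, eval_prod]
    exact Finset.prod_eq_zero (Finset.mem_univ i) (by simp)
  have hPx : ∀ i : Fin n, P.eval (x i) = ∏ j, (x i - y j * x j) := by
    intro i; rw [hP, eval_prod]; simp
  have hP0 : P.eval 0 = (∏ j, y j) * ∏ j, -x j := by
    rw [hP, eval_prod, ← Finset.prod_mul_distrib]
    apply Finset.prod_congr rfl
    intro j _
    simp only [eval_sub, eval_X, eval_C, zero_sub]
    ring
  have hQ0 : Q.eval 0 = ∏ j, -x j := by
    rw [hQ, eval_prod]
    apply Finset.prod_congr rfl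
    intro j _
    simp only [eval_sub, eval_X, eval_C, zero_sub]
  have hterm : ∀ i : Fin n,
      (P.eval (x i) - Q.eval (x i)) * ∏ j ∈ Finset.univ.erase i, ((x i - x j)⁻¹ * (0 - x j))
        = ((1 - y i) * ∏ j ∈ Finset.univ.erase i, (x i - y j * x j) / (x i - x j)) *
            -(∏ j, -x j) := by
    intro i
    rw [hQx, sub_zero, hPx]
    rw [← Finset.mul_prod_erase _ (fun j => x i - y j * x j) (Finset.mem_univ i),
      ← Finset.mul_prod_erase _ (fun j => -x j) (Finset.mem_univ i)]
    simp only [zero_sub]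
    rw [Finset.prod_mul_distrib, Finset.prod_div_distrib, Finset.prod_inv_distrib]
    ring
  rw [Finset.sum_congr rfl (fun i _ => hterm i), ← Finset.sum_mul, hP0, hQ0] at heval
  refine mul_right_cancel₀ (b := -(∏ j, -x j)) (neg_ne_zero.mpr hA) ?_
  rw [← heval]
  ring

section Helpers
variable (q : ℂ) (hq0 : q ≠ 0)

include hq0 in
lemma ratio_qPoch_ne (u v : ℂ) (hv : v ≠ 0) (hg : ∀ t : ℤ, u / v ≠ q ^ t)
    (e : ℤ) (m : ℕ) : qPoch q (q ^ e * u / v) m ≠ 0 := by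
  apply qPoch_ne_zero
  intro t _ hc
  apply hg (-e - (t : ℤ))
  have h1 : q ^ e ≠ 0 := zpow_ne_zero _ hq0
  have h2 : (q : ℂ) ^ t ≠ 0 := pow_ne_zero _ hq0
  rw [div_eq_iff hv, show (-e - (t:ℤ)) = -(e + t) by ring, zpow_neg, zpow_add₀ hq0,
    zpow_natCast]
  field_simp at hc ⊢
  linear_combination hc

include hq0 in
lemma one_sub_ratio_ne (u v : ℂ) (hv : v ≠ 0) (hg : ∀ t : ℤ, u / v ≠ q ^ t)
    (e : ℤ) : 1 - q ^ e * u / v ≠ 0 := by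
  intro hc
  apply hg (-e)
  have h1 : q ^ e ≠ 0 := zpow_ne_zero _ hq0
  rw [div_eq_iff hv, zpow_neg]
  rw [sub_eq_zero, eq_comm, div_eq_one_iff_eq hv] at hc
  rw [eq_inv_mul_iff_mul_eq₀ h1]
  exact hc

include hq0 in
lemma diff_ne (u v : ℂ) (hv : v ≠ 0) (hg : ∀ t : ℤ, u / v ≠ q ^ t)
    (e f : ℤ) : q ^ e * u - q ^ f * v ≠ 0 := by
  intro hc
  apply hg (f - e)
  have h1 : q ^ e ≠ 0 := zpow_ne_zero _ hq0
  rw [div_eq_iff hv, zpow_sub₀ hq0]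
  rw [sub_eq_zero] at hc
  field_simp
  linear_combination hc

lemma qPoch_q_ne (hqroot : ∀ k : ℕ, 1 ≤ k → q ^ k ≠ 1) (m : ℕ) :
    qPoch q q m ≠ 0 := by
  apply qPoch_ne_zero
  intro t _ hc
  exact hqroot (t + 1) (Nat.le_add_left _ _) (by rw [pow_succ, mul_comm]; exact hc)

end Helpers

lemma scalar_cross (q α β u v s : ℂ) (hq : q ≠ 0) (hα : α ≠ 0) (hβ : β ≠ 0)
    (hu : u ≠ 0) (hv : v ≠ 0) (hs : s ≠ 0) :
    (1 - α⁻¹ * u / (v * s)) * (1 - α * β⁻¹ * q * v / u) * ((α⁻¹ * q⁻¹ * u - v)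
        * ((α * u⁻¹ - β * v⁻¹)))
      = (α * u⁻¹ - (v * s)⁻¹) * ((1 - β * α⁻¹ * u / v) * ((1 - α * q * v / u)
        * (α⁻¹ * q⁻¹ * u - β⁻¹ * v))) := by
  field_simp

/-- The off-diagonal (j ≠ k) factor identity. -/
lemma offdiag (q u v s t : ℂ) (hq0 : q ≠ 0) (hu : u ≠ 0) (hv : v ≠ 0) (hs : s ≠ 0)
    (hguv : ∀ k : ℤ, u / v ≠ q ^ k) (hgvu : ∀ k : ℤ, v / u ≠ q ^ k) (a b : ℕ) :
    (qPoch q (q ^ (-((a:ℤ) + 1) + 1) * u / (v * s)) (a + 1) /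
        qPoch q (q ^ ((b:ℤ) - ((a:ℤ) + 1) + 1) * u / v) (a + 1))
      * (qPoch q (q ^ (-(b:ℤ) + 1) * v / (u * t)) b /
          qPoch q (q ^ (((a:ℤ) + 1) - (b:ℤ) + 1) * v / u) b)
      * ((q ^ (-((a:ℤ) + 1)) * u - v) / (q ^ (-((a:ℤ) + 1)) * u - q ^ (-(b:ℤ)) * v))
    = (qPoch q (q ^ (-(a:ℤ) + 1) * u / (v * s)) a /
        qPoch q (q ^ ((b:ℤ) - (a:ℤ) + 1) * u / v) a)
      * (qPoch q (q ^ (-(b:ℤ) + 1) * v / (u * t)) b /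
          qPoch q (q ^ ((a:ℤ) - (b:ℤ) + 1) * v / u) b)
      * ((q ^ (a:ℤ) * u⁻¹ - (v * s)⁻¹) / (q ^ (a:ℤ) * u⁻¹ - q ^ (b:ℤ) * v⁻¹)) := by
  have hmul : ∀ (e : ℤ) (c d : ℂ), q * (q ^ e * c / d) = q ^ (e + 1) * c / d := by
    intro e c d
    rw [← mul_div_assoc, ← mul_assoc, ← zpow_one_add₀ hq0, add_comm 1 e]
  have hα : q ^ (a:ℤ) ≠ 0 := zpow_ne_zero _ hq0
  have hβ : q ^ (b:ℤ) ≠ 0 := zpow_ne_zero _ hq0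
  rw [show (-((a:ℤ) + 1) + 1) = -(a:ℤ) by ring,
    show ((b:ℤ) - ((a:ℤ) + 1) + 1) = (b:ℤ) - (a:ℤ) by ring,
    show (((a:ℤ) + 1) - (b:ℤ) + 1) = ((a:ℤ) - (b:ℤ) + 1) + 1 by ring,
    show (-((a:ℤ) + 1)) = -(a:ℤ) - 1 by ring]
  have st1 : qPoch q (q ^ (-(a:ℤ)) * u / (v * s)) (a + 1)
      = (1 - q ^ (-(a:ℤ)) * u / (v * s)) * qPoch q (q ^ (-(a:ℤ) + 1) * u / (v * s)) a := by
    rw [qPoch_succ_left, hmul]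
  have st2 : qPoch q (q ^ ((b:ℤ) - (a:ℤ)) * u / v) (a + 1)
      = (1 - q ^ ((b:ℤ) - (a:ℤ)) * u / v) * qPoch q (q ^ ((b:ℤ) - (a:ℤ) + 1) * u / v) a := by
    rw [qPoch_succ_left, hmul]
  have h1mE : 1 - q ^ ((a:ℤ) - (b:ℤ) + 1) * v / u ≠ 0 :=
    one_sub_ratio_ne q hq0 v u hu hgvu _
  have st3 : qPoch q (q ^ (((a:ℤ) - (b:ℤ) + 1) + 1) * v / u) b
      = (1 - q ^ ((a:ℤ) + 1) * v / u) * qPoch q (q ^ ((a:ℤ) - (b:ℤ) + 1) * v / u) b /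
          (1 - q ^ ((a:ℤ) - (b:ℤ) + 1) * v / u) := by
    rw [eq_div_iff h1mE]
    have h := qPoch_succ_left q (q ^ ((a:ℤ) - (b:ℤ) + 1) * v / u) b
    rw [hmul] at h
    have h' := qPoch_succ_right q (q ^ ((a:ℤ) - (b:ℤ) + 1) * v / u) b
    have hxq : (q ^ ((a:ℤ) - (b:ℤ) + 1) * v / u) * q ^ b = q ^ ((a:ℤ) + 1) * v / u := by
      rw [div_mul_eq_mul_div, mul_right_comm, ← zpow_natCast q b, ← zpow_add₀ hq0,
        show ((a:ℤ) - (b:ℤ) + 1) + (b:ℤ) = (a:ℤ) + 1 by ring]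
    rw [hxq] at h'
    linear_combination h.symm.trans h'
  rw [st1, st2, st3]
  rw [show q ^ (-(a:ℤ)) = (q ^ (a:ℤ))⁻¹ from zpow_neg q _,
    show q ^ ((b:ℤ) - (a:ℤ)) = q ^ (b:ℤ) * (q ^ (a:ℤ))⁻¹ by
      rw [zpow_sub₀ hq0, div_eq_mul_inv],
    show q ^ ((a:ℤ) + 1) = q ^ (a:ℤ) * q from zpow_add_one₀ hq0 _,
    show q ^ ((a:ℤ) - (b:ℤ) + 1) = q ^ (a:ℤ) * (q ^ (b:ℤ))⁻¹ * q by
      rw [zpow_add_one₀ hq0, zpow_sub₀ hq0, div_eq_mul_inv],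
    show q ^ (-(a:ℤ) - 1) = (q ^ (a:ℤ))⁻¹ * q⁻¹ by
      rw [show -(a:ℤ) - 1 = -((a:ℤ) + 1) by ring, zpow_neg, zpow_add_one₀ hq0, mul_inv],
    show q ^ (-(b:ℤ)) = (q ^ (b:ℤ))⁻¹ from zpow_neg q _]
  have hP2 : qPoch q (q ^ ((b:ℤ) - (a:ℤ) + 1) * u / v) a ≠ 0 :=
    ratio_qPoch_ne q hq0 u v hv hguv _ _
  have hP4 : qPoch q (q ^ (a:ℤ) * (q ^ (b:ℤ))⁻¹ * q * v / u) b ≠ 0 := by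
    have := ratio_qPoch_ne q hq0 v u hu hgvu ((a:ℤ) - (b:ℤ) + 1) b
    rwa [show q ^ ((a:ℤ) - (b:ℤ) + 1) = q ^ (a:ℤ) * (q ^ (b:ℤ))⁻¹ * q by
      rw [zpow_add_one₀ hq0, zpow_sub₀ hq0, div_eq_mul_inv]] at this
  have h1 : 1 - q ^ (b:ℤ) * (q ^ (a:ℤ))⁻¹ * u / v ≠ 0 := by
    have := one_sub_ratio_ne q hq0 u v hv hguv ((b:ℤ) - (a:ℤ))
    rwa [show q ^ ((b:ℤ) - (a:ℤ)) = q ^ (b:ℤ) * (q ^ (a:ℤ))⁻¹ by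
      rw [zpow_sub₀ hq0, div_eq_mul_inv]] at this
  have h2 : 1 - q ^ (a:ℤ) * q * v / u ≠ 0 := by
    have := one_sub_ratio_ne q hq0 v u hu hgvu ((a:ℤ) + 1)
    rwa [zpow_add_one₀ hq0] at this
  have h3 : (q ^ (a:ℤ))⁻¹ * q⁻¹ * u - (q ^ (b:ℤ))⁻¹ * v ≠ 0 := by
    have := diff_ne q hq0 u v hv hguv (-(a:ℤ) - 1) (-(b:ℤ))
    rwa [show q ^ (-(a:ℤ) - 1) = (q ^ (a:ℤ))⁻¹ * q⁻¹ by
        rw [show -(a:ℤ) - 1 = -((a:ℤ) + 1) by ring, zpow_neg, zpow_add_one₀ hq0, mul_inv],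
      show q ^ (-(b:ℤ)) = (q ^ (b:ℤ))⁻¹ from zpow_neg q _] at this
  have h4 : q ^ (a:ℤ) * u⁻¹ - q ^ (b:ℤ) * v⁻¹ ≠ 0 := by
    exact diff_ne q hq0 u⁻¹ v⁻¹ (inv_ne_zero hv)
      (by intro k hk; exact hgvu k (by rwa [inv_div_inv] at hk)) (a:ℤ) (b:ℤ)
  rw [div_div_eq_mul_div]
  rw [div_mul_div_comm, div_mul_div_comm, div_mul_div_comm, div_mul_div_comm]
  rw [div_eq_div_iff
    (mul_ne_zero (mul_ne_zero (mul_ne_zero h1 hP2) (mul_ne_zero h2 hP4)) h3)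
    (mul_ne_zero (mul_ne_zero hP2 hP4) h4)]
  linear_combination (qPoch q (q ^ (-(a:ℤ) + 1) * u / (v * s)) a
      * qPoch q (q ^ ((b:ℤ) - (a:ℤ) + 1) * u / v) a
      * qPoch q (q ^ (-(b:ℤ) + 1) * v / (u * t)) b
      * qPoch q (q ^ (a:ℤ) * (q ^ (b:ℤ))⁻¹ * q * v / u) b)
    * scalar_cross q (q ^ (a:ℤ)) (q ^ (b:ℤ)) u v s hq0 hα hβ hu hv hs

/-- The diagonal (j = k) factor identity. -/
lemma diag (q u s : ℂ) (hq0 : q ≠ 0) (hqroot : ∀ k : ℕ, 1 ≤ k → q ^ k ≠ 1)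
    (hu : u ≠ 0) (hs : s ≠ 0) (a : ℕ) :
    (qPoch q (q ^ (-((a:ℤ) + 1) + 1) * u / (u * s)) (a + 1) /
        qPoch q (q ^ (((a:ℤ) + 1) - ((a:ℤ) + 1) + 1) * u / u) (a + 1)) * (1 - q ^ (a + 1))
    = (qPoch q (q ^ (-(a:ℤ) + 1) * u / (u * s)) a /
        qPoch q (q ^ ((a:ℤ) - (a:ℤ) + 1) * u / u) a) * (1 - q ^ (-(a:ℤ)) * s⁻¹) := by
  have hmul : ∀ (e : ℤ) (c d : ℂ), q * (q ^ e * c / d) = q ^ (e + 1) * c / d := by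
    intro e c d
    rw [← mul_div_assoc, ← mul_assoc, ← zpow_one_add₀ hq0, add_comm 1 e]
  rw [show (-((a:ℤ) + 1) + 1) = -(a:ℤ) by ring,
    show (((a:ℤ) + 1) - ((a:ℤ) + 1) + 1) = (1:ℤ) by ring,
    show ((a:ℤ) - (a:ℤ) + 1) = (1:ℤ) by ring]
  have harg : q ^ (1:ℤ) * u / u = q := by
    rw [zpow_one, mul_div_assoc, div_self hu, mul_one]
  rw [harg]
  have st1 : qPoch q (q ^ (-(a:ℤ)) * u / (u * s)) (a + 1)
      = (1 - q ^ (-(a:ℤ)) * u / (u * s)) * qPoch q (q ^ (-(a:ℤ) + 1) * u / (u * s)) a := by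
    rw [qPoch_succ_left, hmul]
  have st2 : qPoch q q (a + 1) = qPoch q q a * (1 - q ^ (a + 1)) := by
    rw [qPoch_succ_right, pow_succ]
    ring
  have hfac : q ^ (-(a:ℤ)) * u / (u * s) = q ^ (-(a:ℤ)) * s⁻¹ := by
    rw [mul_div_assoc]
    congr 1
    field_simp
  rw [st1, st2, hfac]
  have hP2 : qPoch q q a ≠ 0 := qPoch_q_ne q hqroot a
  have hC : 1 - q ^ (a + 1) ≠ 0 :=
    sub_ne_zero_of_ne (Ne.symm (hqroot (a + 1) (Nat.le_add_left _ _)))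
  field_simp

/-- Splitting a double product over `Fin n × Fin n` at index `k`. -/
lemma prod_split {n : ℕ} (f : Fin n → Fin n → ℂ) (k : Fin n) :
    ∏ i, ∏ j, f i j
      = (f k k * ∏ j ∈ Finset.univ.erase k, (f k j * f j k)) *
          ∏ i ∈ Finset.univ.erase k, ∏ j ∈ Finset.univ.erase k, f i j := by
  rw [← Finset.mul_prod_erase Finset.univ (fun i => ∏ j, f i j) (Finset.mem_univ k)]
  rw [← Finset.mul_prod_erase Finset.univ (fun j => f k j) (Finset.mem_univ k)]
  rw [Finset.prod_congr rfl
    (fun i (_ : i ∈ Finset.univ.erase k) =>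
      (Finset.mul_prod_erase Finset.univ (fun j => f i j) (Finset.mem_univ k)).symm)]
  rw [Finset.prod_mul_distrib, Finset.prod_mul_distrib]
  ring

section Main
variable {n : ℕ} (q : ℂ) (z w : Fin n → ℂ)

noncomputable def Qf (γ : Fin n → ℕ) (i j : Fin n) : ℂ :=
  qPoch q (q ^ (-(γ i : ℤ) + 1) * z i / (z j * w j)) (γ i) /
    qPoch q (q ^ ((γ j : ℤ) - (γ i : ℤ) + 1) * z i / z j) (γ i)

noncomputable def Tf (γ : Fin n → ℕ) : ℂ := ∏ i, ∏ j, Qf q z w γ i j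

noncomputable def Dp (γ : Fin n → ℕ) (k : Fin n) : ℂ :=
  (1 - q ^ (γ k)) * ∏ j ∈ Finset.univ.erase k,
    (q ^ (-(γ k : ℤ)) * z k - z j) / (q ^ (-(γ k : ℤ)) * z k - q ^ (-(γ j : ℤ)) * z j)

noncomputable def Mp (δ : Fin n → ℕ) (k : Fin n) : ℂ :=
  (1 - q ^ (-(δ k : ℤ)) * (w k)⁻¹) * ∏ j ∈ Finset.univ.erase k,
    (q ^ (δ k : ℤ) * (z k)⁻¹ - (z j * w j)⁻¹) /
      (q ^ (δ k : ℤ) * (z k)⁻¹ - q ^ (δ j : ℤ) * (z j)⁻¹)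

variable (hq0 : q ≠ 0) (hqroot : ∀ k : ℕ, 1 ≤ k → q ^ k ≠ 1)
  (hz : ∀ i, z i ≠ 0) (hw : ∀ i, w i ≠ 0)
  (hgen : ∀ i j, i ≠ j → ∀ k : ℤ, z i / z j ≠ q ^ k)

include hq0 hz hgen in
lemma zdist (i j : Fin n) (hij : i ≠ j) (a b : ℤ) : q ^ a * z i ≠ q ^ b * z j := by
  intro hc
  apply hgen i j hij (b - a)
  rw [zpow_sub₀ hq0, div_eq_div_iff (hz j) (zpow_ne_zero _ hq0)]
  linear_combination hc

include hq0 hz hgen in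
lemma sum_Dp (γ : Fin n → ℕ) : ∑ k, Dp q z γ k = 1 - q ^ (∑ i, γ i) := by
  have hm := milne (fun j => q ^ (-(γ j : ℤ)) * z j) (fun j => q ^ (γ j))
    (fun i => mul_ne_zero (zpow_ne_zero _ hq0) (hz i))
    (fun i j hij => zdist q z hq0 hz hgen i j hij _ _)
  rw [Finset.prod_pow_eq_pow_sum] at hm
  rw [← hm]
  apply Finset.sum_congr rfl
  intro k _
  unfold Dp
  congr 1
  apply Finset.prod_congr rfl
  intro j _
  congr 2
  rw [← mul_assoc, ← zpow_natCast q (γ j), ← zpow_add₀ hq0]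
  simp

include hq0 hz hw hgen in
lemma sum_Mp (δ : Fin n → ℕ) :
    ∑ k, Mp q z w δ k = 1 - (∏ i, (w i)⁻¹) * (q ^ (∑ i, δ i))⁻¹ := by
  have hm := milne (fun j => q ^ ((δ j : ℤ)) * (z j)⁻¹) (fun j => q ^ (-(δ j : ℤ)) * (w j)⁻¹)
    (fun i => mul_ne_zero (zpow_ne_zero _ hq0) (inv_ne_zero (hz i)))
    (by
      intro i j hij hc
      exact zdist q (fun i => (z i)⁻¹) hq0 (fun i => inv_ne_zero (hz i))
        (by
          intro a b hab k hk
          apply hgen b a (Ne.symm hab) k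
          rwa [inv_div_inv] at hk)
        i j hij (δ i : ℤ) (δ j : ℤ) hc)
  have hprod : ∏ j, q ^ (-(δ j : ℤ)) * (w j)⁻¹
      = (∏ i, (w i)⁻¹) * (q ^ (∑ i, δ i))⁻¹ := by
    rw [Finset.prod_mul_distrib, mul_comm]
    congr 1
    simp only [zpow_neg, zpow_natCast]
    rw [Finset.prod_inv_distrib, Finset.prod_pow_eq_pow_sum]
  rw [hprod] at hm
  rw [← hm]
  apply Finset.sum_congr rfl
  intro k _
  unfold Mp
  congr 1
  apply Finset.prod_congr rfl
  intro j _
  have harg : q ^ (-(δ j : ℤ)) * (w j)⁻¹ * (q ^ ((δ j : ℤ)) * (z j)⁻¹) = (z j * w j)⁻¹ := by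
    calc q ^ (-(δ j : ℤ)) * (w j)⁻¹ * (q ^ ((δ j : ℤ)) * (z j)⁻¹)
        = (q ^ (-(δ j : ℤ)) * q ^ ((δ j : ℤ))) * ((z j)⁻¹ * (w j)⁻¹) := by ring
      _ = (z j * w j)⁻¹ := by
          rw [← zpow_add₀ hq0, neg_add_cancel, zpow_zero, one_mul, mul_inv]
  rw [harg]

include hq0 hqroot hz hw hgen in
/-- The key termwise identity. -/
lemma key (δ : Fin n → ℕ) (k : Fin n) :
    Tf q z w (Function.update δ k (δ k + 1)) * Dp q z (Function.update δ k (δ k + 1)) k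
      = Tf q z w δ * Mp q z w δ k := by
  set γ := Function.update δ k (δ k + 1) with hγdef
  have hγk : γ k = δ k + 1 := Function.update_self k _ δ
  have hγj : ∀ j, j ≠ k → γ j = δ j := fun j hjk => Function.update_of_ne hjk _ δ
  have hkk : Qf q z w γ k k * (1 - q ^ (γ k))
      = Qf q z w δ k k * (1 - q ^ (-(δ k : ℤ)) * (w k)⁻¹) := by
    unfold Qf
    rw [hγk]
    push_cast
    exact diag q (z k) (w k) hq0 hqroot (hz k) (hw k) (δ k)
  have hoff : ∀ j ∈ Finset.univ.erase k,
      Qf q z w γ k j * Qf q z w γ j k *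
        ((q ^ (-(γ k : ℤ)) * z k - z j) / (q ^ (-(γ k : ℤ)) * z k - q ^ (-(γ j : ℤ)) * z j))
      = Qf q z w δ k j * Qf q z w δ j k *
        ((q ^ (δ k : ℤ) * (z k)⁻¹ - (z j * w j)⁻¹) /
          (q ^ (δ k : ℤ) * (z k)⁻¹ - q ^ (δ j : ℤ) * (z j)⁻¹)) := by
    intro j hj
    have hjk : j ≠ k := (Finset.mem_erase.mp hj).1
    unfold Qf
    rw [hγk, hγj j hjk]
    push_cast
    exact offdiag q (z k) (z j) (w j) (w k) hq0 (hz k) (hz j) (hw j)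
      (hgen k j (Ne.symm hjk)) (hgen j k hjk) (δ k) (δ j)
  have hR0 : ∏ i ∈ Finset.univ.erase k, ∏ j ∈ Finset.univ.erase k, Qf q z w γ i j
      = ∏ i ∈ Finset.univ.erase k, ∏ j ∈ Finset.univ.erase k, Qf q z w δ i j := by
    apply Finset.prod_congr rfl
    intro i hi
    apply Finset.prod_congr rfl
    intro j hj
    unfold Qf
    rw [hγj i (Finset.mem_erase.mp hi).1, hγj j (Finset.mem_erase.mp hj).1]
  have hmerge1 : ∏ j ∈ Finset.univ.erase k,
      (Qf q z w γ k j * Qf q z w γ j k *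
        ((q ^ (-(γ k : ℤ)) * z k - z j) / (q ^ (-(γ k : ℤ)) * z k - q ^ (-(γ j : ℤ)) * z j)))
      = (∏ j ∈ Finset.univ.erase k, (Qf q z w γ k j * Qf q z w γ j k)) *
        ∏ j ∈ Finset.univ.erase k,
          ((q ^ (-(γ k : ℤ)) * z k - z j) / (q ^ (-(γ k : ℤ)) * z k - q ^ (-(γ j : ℤ)) * z j)) :=
    Finset.prod_mul_distrib
  have hmerge2 : ∏ j ∈ Finset.univ.erase k,
      (Qf q z w δ k j * Qf q z w δ j k *
        ((q ^ (δ k : ℤ) * (z k)⁻¹ - (z j * w j)⁻¹) /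
          (q ^ (δ k : ℤ) * (z k)⁻¹ - q ^ (δ j : ℤ) * (z j)⁻¹)))
      = (∏ j ∈ Finset.univ.erase k, (Qf q z w δ k j * Qf q z w δ j k)) *
        ∏ j ∈ Finset.univ.erase k,
          ((q ^ (δ k : ℤ) * (z k)⁻¹ - (z j * w j)⁻¹) /
            (q ^ (δ k : ℤ) * (z k)⁻¹ - q ^ (δ j : ℤ) * (z j)⁻¹)) :=
    Finset.prod_mul_distrib
  calc Tf q z w γ * Dp q z γ k
      = (Qf q z w γ k k * (1 - q ^ (γ k))) *
          (∏ j ∈ Finset.univ.erase k,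
            (Qf q z w γ k j * Qf q z w γ j k *
              ((q ^ (-(γ k : ℤ)) * z k - z j) /
                (q ^ (-(γ k : ℤ)) * z k - q ^ (-(γ j : ℤ)) * z j)))) *
          ∏ i ∈ Finset.univ.erase k, ∏ j ∈ Finset.univ.erase k, Qf q z w γ i j := by
        unfold Tf Dp
        rw [prod_split (fun i j => Qf q z w γ i j) k, hmerge1]
        ring
    _ = (Qf q z w δ k k * (1 - q ^ (-(δ k : ℤ)) * (w k)⁻¹)) *
          (∏ j ∈ Finset.univ.erase k,
            (Qf q z w δ k j * Qf q z w δ j k *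
              ((q ^ (δ k : ℤ) * (z k)⁻¹ - (z j * w j)⁻¹) /
                (q ^ (δ k : ℤ) * (z k)⁻¹ - q ^ (δ j : ℤ) * (z j)⁻¹)))) *
          ∏ i ∈ Finset.univ.erase k, ∏ j ∈ Finset.univ.erase k, Qf q z w δ i j := by
        rw [hkk, Finset.prod_congr rfl hoff, hR0]
    _ = Tf q z w δ * Mp q z w δ k := by
        unfold Tf Mp
        rw [prod_split (fun i j => Qf q z w δ i j) k, hmerge2]
        ring

/-- Reindexing: pairs (γ, k) with |γ| = l+1, γ k ≠ 0 correspond to pairs (δ, k), |δ| = l. -/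
lemma reindex {n : ℕ} (l : ℕ) (F : (Fin n → ℕ) → Fin n → ℂ) :
    ∑ γ ∈ Finset.Nat.antidiagonalTuple n (l + 1),
        ∑ k ∈ Finset.univ.filter (fun k => γ k ≠ 0), F γ k
      = ∑ δ ∈ Finset.Nat.antidiagonalTuple n l, ∑ k, F (Function.update δ k (δ k + 1)) k := by
  classical
  rw [Finset.sum_sigma', Finset.sum_sigma']
  apply Finset.sum_bij'
    (i := fun (p : Σ _ : Fin n → ℕ, Fin n) (_ : p ∈ _) =>
      (⟨Function.update p.1 p.2 (p.1 p.2 - 1), p.2⟩ : Σ _ : Fin n → ℕ, Fin n))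
    (j := fun (p : Σ _ : Fin n → ℕ, Fin n) (_ : p ∈ _) =>
      (⟨Function.update p.1 p.2 (p.1 p.2 + 1), p.2⟩ : Σ _ : Fin n → ℕ, Fin n))
  · intro p hp
    rw [Finset.mem_sigma] at hp ⊢
    obtain ⟨h1, h2⟩ := hp
    rw [Finset.mem_filter] at h2
    refine ⟨?_, Finset.mem_univ _⟩
    rw [Finset.Nat.mem_antidiagonalTuple]
    rw [Finset.sum_update_of_mem (Finset.mem_univ _), Finset.sdiff_singleton_eq_erase]
    have hE := Finset.add_sum_erase Finset.univ p.1 (Finset.mem_univ p.2)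
    have hS := Finset.Nat.mem_antidiagonalTuple.mp h1
    have hne := h2.2
    omega
  · intro p hp
    rw [Finset.mem_sigma] at hp ⊢
    obtain ⟨h1, _⟩ := hp
    refine ⟨?_, ?_⟩
    · rw [Finset.Nat.mem_antidiagonalTuple]
      rw [Finset.sum_update_of_mem (Finset.mem_univ _), Finset.sdiff_singleton_eq_erase]
      have hE := Finset.add_sum_erase Finset.univ p.1 (Finset.mem_univ p.2)
      have hS := Finset.Nat.mem_antidiagonalTuple.mp h1
      omega
    · rw [Finset.mem_filter]
      refine ⟨Finset.mem_univ _, ?_⟩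
      simp [Function.update_self]
  · intro p hp
    rw [Finset.mem_sigma] at hp
    have hne : p.1 p.2 ≠ 0 := (Finset.mem_filter.mp hp.2).2
    have hfun : Function.update (Function.update p.1 p.2 (p.1 p.2 - 1)) p.2
        ((Function.update p.1 p.2 (p.1 p.2 - 1)) p.2 + 1) = p.1 := by
      funext x
      rcases eq_or_ne x p.2 with rfl | hx
      · simp only [Function.update_self]
        omega
      · simp only [Function.update_of_ne hx]
    simp only [hfun]
  · intro p _
    have hfun : Function.update (Function.update p.1 p.2 (p.1 p.2 + 1)) p.2
        ((Function.update p.1 p.2 (p.1 p.2 + 1)) p.2 - 1) = p.1 := by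
      funext x
      rcases eq_or_ne x p.2 with rfl | hx
      · simp only [Function.update_self]
        omega
      · simp only [Function.update_of_ne hx]
    simp only [hfun]
  · intro p hp
    rw [Finset.mem_sigma] at hp
    have hne : p.1 p.2 ≠ 0 := (Finset.mem_filter.mp hp.2).2
    have hfun : Function.update (Function.update p.1 p.2 (p.1 p.2 - 1)) p.2
        ((Function.update p.1 p.2 (p.1 p.2 - 1)) p.2 + 1) = p.1 := by
      funext x
      rcases eq_or_ne x p.2 with rfl | hx
      · simp only [Function.update_self]
        omega
      · simp only [Function.update_of_ne hx]
    rw [hfun]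

include hq0 hqroot hz hw hgen in
lemma main_aux (l : ℕ) :
    qPoch q ((∏ i, (w i)⁻¹) * q ^ (-(l : ℤ) + 1)) l / qPoch q q l
      = ∑ γ ∈ Finset.Nat.antidiagonalTuple n l, Tf q z w γ := by
  induction l with
  | zero =>
    rw [Finset.Nat.antidiagonalTuple_zero_right, Finset.sum_singleton]
    unfold Tf Qf qPoch
    simp
  | succ l ih =>
    have h1q : (1 : ℂ) - q ^ (l + 1) ≠ 0 :=
      sub_ne_zero_of_ne (Ne.symm (hqroot (l + 1) (Nat.le_add_left _ _)))
    have hchain : (1 - q ^ (l + 1)) * ∑ γ ∈ Finset.Nat.antidiagonalTuple n (l + 1), Tf q z w γ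
        = (1 - (∏ i, (w i)⁻¹) * (q ^ l)⁻¹) *
            ∑ δ ∈ Finset.Nat.antidiagonalTuple n l, Tf q z w δ := by
      calc (1 - q ^ (l + 1)) * ∑ γ ∈ Finset.Nat.antidiagonalTuple n (l + 1), Tf q z w γ
          = ∑ γ ∈ Finset.Nat.antidiagonalTuple n (l + 1), Tf q z w γ * (1 - q ^ (l + 1)) := by
            rw [Finset.mul_sum]
            exact Finset.sum_congr rfl fun γ _ => mul_comm _ _
        _ = ∑ γ ∈ Finset.Nat.antidiagonalTuple n (l + 1), ∑ k, Tf q z w γ * Dp q z γ k := by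
            apply Finset.sum_congr rfl
            intro γ hγ
            rw [← Finset.mul_sum, sum_Dp q z hq0 hz hgen γ,
              Finset.Nat.mem_antidiagonalTuple.mp hγ]
        _ = ∑ γ ∈ Finset.Nat.antidiagonalTuple n (l + 1),
              ∑ k ∈ Finset.univ.filter (fun k => γ k ≠ 0), Tf q z w γ * Dp q z γ k := by
            apply Finset.sum_congr rfl
            intro γ _
            refine (Finset.sum_filter_of_ne ?_).symm
            intro k _ hne hzero
            apply hne
            unfold Dp
            rw [hzero, pow_zero, sub_self, zero_mul, mul_zero]
        _ = ∑ δ ∈ Finset.Nat.antidiagonalTuple n l,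
              ∑ k, Tf q z w (Function.update δ k (δ k + 1)) *
                Dp q z (Function.update δ k (δ k + 1)) k :=
            reindex l (fun γ k => Tf q z w γ * Dp q z γ k)
        _ = ∑ δ ∈ Finset.Nat.antidiagonalTuple n l, ∑ k, Tf q z w δ * Mp q z w δ k := by
            apply Finset.sum_congr rfl
            intro δ _
            exact Finset.sum_congr rfl fun k _ => key q z w hq0 hqroot hz hw hgen δ k
        _ = (1 - (∏ i, (w i)⁻¹) * (q ^ l)⁻¹) *
              ∑ δ ∈ Finset.Nat.antidiagonalTuple n l, Tf q z w δ := by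
            rw [Finset.mul_sum]
            apply Finset.sum_congr rfl
            intro δ hδ
            rw [← Finset.mul_sum, sum_Mp q z w hq0 hz hw hgen δ,
              Finset.Nat.mem_antidiagonalTuple.mp hδ, mul_comm]
    -- now the LHS recursion
    have hP2 : qPoch q q l ≠ 0 := qPoch_q_ne q hqroot l
    apply mul_left_cancel₀ h1q
    rw [hchain, ← ih]
    have hexp : (-((l : ℕ) + 1 : ℕ) : ℤ) + 1 = -(l : ℤ) := by push_cast; ring
    have harg : qPoch q ((∏ i, (w i)⁻¹) * q ^ ((-((l : ℕ) + 1 : ℕ) : ℤ) + 1)) (l + 1)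
        = (1 - (∏ i, (w i)⁻¹) * q ^ (-(l : ℤ))) *
            qPoch q ((∏ i, (w i)⁻¹) * q ^ (-(l : ℤ) + 1)) l := by
      rw [hexp, qPoch_succ_left,
        show q * ((∏ i, (w i)⁻¹) * q ^ (-(l : ℤ))) = (∏ i, (w i)⁻¹) * q ^ (-(l : ℤ) + 1) by
          rw [mul_left_comm, ← zpow_one_add₀ hq0, add_comm 1 (-(l:ℤ))]]
    have hden : qPoch q q (l + 1) = qPoch q q l * (1 - q ^ (l + 1)) := by
      rw [qPoch_succ_right, pow_succ]
      ring
    rw [harg, hden]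
    rw [show (1 : ℂ) - (∏ i, (w i)⁻¹) * (q ^ l)⁻¹
        = 1 - (∏ i, (w i)⁻¹) * q ^ (-(l : ℤ)) by
      rw [zpow_neg, zpow_natCast]]
    field_simp

end Main

/-- the main q-series identity (eq. (29) of the paper). -/
theorem stmt_0 (q : ℂ) (hq0 : q ≠ 0) (hqroot : ∀ k : ℕ, 1 ≤ k → q ^ k ≠ 1)
    (n : ℕ) (hn : 1 ≤ n) (w z : Fin n → ℂ)
    (hw : ∀ i, w i ≠ 0) (hz : ∀ i, z i ≠ 0)
    (hgen : ∀ i j, i ≠ j → ∀ k : ℤ, z i / z j ≠ q ^ k)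
    (l : ℕ) :
    qPoch q ((∏ i, (w i)⁻¹) * q ^ (-(l : ℤ) + 1)) l / qPoch q q l =
      ∑ γ ∈ Finset.Nat.antidiagonalTuple n l,
        ∏ i, ∏ j,
          qPoch q (q ^ (-(γ i : ℤ) + 1) * z i / (z j * w j)) (γ i) /
            qPoch q (q ^ ((γ j : ℤ) - (γ i : ℤ) + 1) * z i / z j) (γ i) := by
  have h := main_aux q z w hq0 hqroot hz hw hgen l
  unfold Tf Qf at h
  exact h
end

section
/- Let $q$ be a nonzero complex number that is not a root of unity, and let $m \geq l \geq 0$ be integers. Fix $\beta, \gamma \in \mathbb{Z}_{\geq 0}^{n+1}$ with $|\beta| = m$, $|\gamma| = l$ and $\gamma_i \leq \beta_i$ for all $i$. For a real parameter $t$, set $c_i = t(n+1-i) + \tilde{c}_i$ for fixed integers $\tilde{c}_i$, and define $$S(t) = \binom{m}{l}_q^{-1} \prod_{1\le i,j\le n+1} \frac{(q^{c_i-c_j-\gamma_i+\beta_j+1};q)_{\gamma_i}}{(q^{c_i-c_j-\gamma_i+\gamma_j+1};q)_{\gamma_i}}.$$ If $|q| < 1$, then $$\lim_{t \to \infty} S(t)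 = q^{\sum_{1\le i<j\le n+1}(\beta_i-\gamma_i)\gamma_j}\, \binom{m}{l}_q^{-1} \prod_{i=1}^{n+1}\binom{\beta_i}{\gamma_i}_q.$$ -/
set_option autoImplicit false

/-- The real q-Pochhammer symbol `(x;q)_m = ∏_{k=0}^{m-1} (1 - x qᵏ)`. -/
noncomputable def qPochR (q x : ℝ) (m : ℕ) : ℝ := ∏ k ∈ Finset.range m, (1 - x * q ^ k)

/-- The Gaussian (q-)binomial coefficient. -/
noncomputable def qBinomR (q : ℝ) (m l : ℕ) : ℝ :=
  if l ≤ m then qPochR q q m / (qPochR q q l * qPochR q q (m - l)) else 0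

/-!
The factor indexed by `(i, j)` depends on `t` only through `u = q^(c_i - c_j)`, and
`c_i - c_j = t (j - i) + const`. For `i < j` we have `u → 0`, so both Pochhammer symbols tend
to `1`. For `i = j` the factor does not depend on `t` and equals `binom(β_i, γ_i)_q`. For
`j < i` we have `u → ∞`, and each ratio `(1 - u q^(β_j + k)) / (1 - u q^(γ_j + k))` tends to
`q^(β_j - γ_j)`, giving `q^(γ_i (β_j - γ_j))`. Collecting these powers over `j < i` gives the
exponent in the limit.
-/

open Filter Finset Topology

section QPochhammer

lemma qPochR_zero_left (q : ℝ) (m : ℕ) : qPochR q 0 m = 1 := by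
  simp [qPochR]

lemma continuous_qPochR (q : ℝ) (m : ℕ) : Continuous fun x => qPochR q x m :=
  continuous_finsetProd _ fun _ _ => continuous_const.sub (continuous_id.mul continuous_const)

lemma qPochR_add (q x : ℝ) (a b : ℕ) :
    qPochR q x (a + b) = qPochR q x a * qPochR q (x * q ^ a) b := by
  simp only [qPochR, prod_range_add, pow_add, mul_assoc]

lemma qPochR_self_pos {q : ℝ} (hq0 : 0 ≤ q) (hq1 : q < 1) (m : ℕ) : 0 < qPochR q q m :=
  prod_pos fun k _ => by
    rw [← pow_succ']
    exact sub_pos.mpr (pow_lt_one₀ hq0 hq1 k.succ_ne_zero)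

lemma qBinomR_eq_qPochR_div {q : ℝ} (hq0 : 0 ≤ q) (hq1 : q < 1) {b g : ℕ} (hgb : g ≤ b) :
    qBinomR q b g = qPochR q (q ^ (b - g + 1)) g / qPochR q q g := by
  have hsplit := qPochR_add q q (b - g) g
  rw [Nat.sub_add_cancel hgb, ← pow_succ'] at hsplit
  have h₁ := (qPochR_self_pos hq0 hq1 (b - g)).ne'
  have h₂ := (qPochR_self_pos hq0 hq1 g).ne'
  rw [qBinomR, if_pos hgb, hsplit]
  field_simp

lemma tendsto_one_sub_mul_div_one_sub_mul_atTop (a : ℝ) {b : ℝ} (hb : b ≠ 0) :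
    Tendsto (fun u : ℝ => (1 - u * a) / (1 - u * b)) atTop (𝓝 (a / b)) := by
  have hinv : Tendsto (fun u : ℝ => (u⁻¹ - a) / (u⁻¹ - b)) atTop (𝓝 (a / b)) := by
    have := (tendsto_inv_atTop_zero.sub_const a).div (tendsto_inv_atTop_zero.sub_const b)
      (by simpa using hb)
    simpa [neg_div_neg_eq, Pi.div_def] using this
  refine hinv.congr' ?_
  filter_upwards [eventually_gt_atTop 0] with u hu
  rw [← mul_div_mul_left _ _ hu.ne', mul_sub, mul_sub, mul_inv_cancel₀ hu.ne']

lemma tendsto_qPochR_div_qPochR_atTop {q : ℝ} (hq : q ≠ 0) (a : ℝ) {b : ℝ} (hb : b ≠ 0) (m : ℕ) :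
    Tendsto (fun u => qPochR q (u * a) m / qPochR q (u * b) m) atTop (𝓝 ((a / b) ^ m)) := by
  have hfactor (k : ℕ) : Tendsto (fun u : ℝ => (1 - u * (a * q ^ k)) / (1 - u * (b * q ^ k)))
      atTop (𝓝 (a / b)) := by
    simpa [mul_div_mul_right _ _ (pow_ne_zero k hq)] using
      tendsto_one_sub_mul_div_one_sub_mul_atTop (a * q ^ k) (mul_ne_zero hb (pow_ne_zero k hq))
  simpa [qPochR, ← prod_div_distrib, mul_assoc] using
    tendsto_finsetProd (range m) fun k _ => hfactor k

end QPochhammer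

section PochhammerRatio

variable {α : Type*} {l : Filter α} {q : ℝ}

lemma tendsto_qPochR_rpow_div_of_tendsto_atTop (hq0 : 0 < q) (hq1 : q < 1) {d : α → ℝ}
    (hd : Tendsto d l atTop) (a b : ℝ) (m : ℕ) :
    Tendsto (fun t => qPochR q (q ^ (d t + a)) m / qPochR q (q ^ (d t + b)) m) l (𝓝 1) := by
  have hpoch (a : ℝ) : Tendsto (fun t => qPochR q (q ^ (d t + a)) m) l (𝓝 1) := by
    have hpow := (tendsto_rpow_atTop_of_base_lt_one q (by linarith) hq1).comp
      (tendsto_atTop_add_const_right l a hd)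
    simpa [qPochR_zero_left, Function.comp_def] using
      ((continuous_qPochR q m).tendsto 0).comp hpow
  simpa [Pi.div_def] using (hpoch a).div (hpoch b) one_ne_zero

lemma tendsto_qPochR_rpow_div_of_tendsto_atBot (hq0 : 0 < q) (hq1 : q < 1) {d : α → ℝ}
    (hd : Tendsto d l atBot) (a b : ℝ) (m : ℕ) :
    Tendsto (fun t => qPochR q (q ^ (d t + a)) m / qPochR q (q ^ (d t + b)) m) l
      (𝓝 ((q ^ a / q ^ b) ^ m)) := by
  have hu := (tendsto_rpow_atBot_of_base_lt_one q hq0 hq1).comp hd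
  simpa [Real.rpow_add hq0, Function.comp_def] using
    (tendsto_qPochR_div_qPochR_atTop hq0.ne' (q ^ a) (Real.rpow_pos_of_pos hq0 b).ne' m).comp hu

end PochhammerRatio

section VertexLimit

variable {ι : Type*} [Fintype ι] [LinearOrder ι]

noncomputable def vertexLimitFactor (q : ℝ) (β γ : ι → ℕ) (i j : ι) : ℝ :=
  (if i = j then qBinomR q (β i) (γ i) else 1) * q ^ (if j < i then γ i * (β j - γ j) else 0)

lemma sum_sum_ite_lt_eq_sum_filter_lt (β γ : ι → ℕ) :
    ∑ i, ∑ j, (if j < i then γ i * (β j - γ j) else 0) =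
      ∑ p ∈ univ.filter (fun p : ι × ι => p.1 < p.2), (β p.1 - γ p.1) * γ p.2 := by
  rw [sum_filter, Fintype.sum_prod_type, sum_comm]
  refine sum_congr rfl fun j _ => sum_congr rfl fun i _ => ?_
  split_ifs <;> ring

lemma prod_prod_vertexLimitFactor (q : ℝ) (β γ : ι → ℕ) :
    ∏ i, ∏ j, vertexLimitFactor q β γ i j =
      q ^ (∑ p ∈ univ.filter (fun p : ι × ι => p.1 < p.2), (β p.1 - γ p.1) * γ p.2) *
        ∏ i, qBinomR q (β i) (γ i) := by
  simp only [vertexLimitFactor, prod_mul_distrib, prod_ite_eq, mem_univ, if_true,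
    prod_pow_eq_pow_sum, sum_sum_ite_lt_eq_sum_filter_lt]
  ring

end VertexLimit

lemma tendsto_qPochR_ratio_vertexLimitFactor {q : ℝ} (hq0 : 0 < q) (hq1 : q < 1) {N : ℕ}
    (β γ : Fin N → ℕ) (hγβ : ∀ i, γ i ≤ β i) (c : ℝ → Fin N → ℝ) (e : Fin N → ℝ)
    (hc : ∀ t i j, c t i - c t j = t * ((j : ℕ) - (i : ℕ) : ℝ) + (e i - e j)) (i j : Fin N) :
    Tendsto (fun t =>
        qPochR q (q ^ (c t i - c t j - (γ i : ℝ) + (β j : ℝ) + 1)) (γ i) /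
          qPochR q (q ^ (c t i - c t j - (γ i : ℝ) + (γ j : ℝ) + 1)) (γ i))
      atTop (𝓝 (vertexLimitFactor q β γ i j)) := by
  set d : ℝ → ℝ := fun t => t * ((j : ℕ) - (i : ℕ) : ℝ) + (e i - e j - γ i + 1)
  have hexp (t b : ℝ) : c t i - c t j - (γ i : ℝ) + b + 1 = d t + b := by
    simp only [d, hc]; ring
  simp only [hexp]
  rcases lt_trichotomy i j with hij | rfl | hji
  · have hslope : (0 : ℝ) < (j : ℕ) - (i : ℕ) := sub_pos.mpr (Nat.cast_lt.mpr hij)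
    have hd : Tendsto d atTop atTop :=
      tendsto_atTop_add_const_right _ _ (tendsto_id.atTop_mul_const hslope)
    simpa [vertexLimitFactor, hij.ne, hij.not_gt] using
      tendsto_qPochR_rpow_div_of_tendsto_atTop hq0 hq1 hd (β j) (γ j) (γ i)
  · have hconst (t : ℝ) : qPochR q (q ^ (d t + β i)) (γ i) / qPochR q (q ^ (d t + γ i)) (γ i) =
        qBinomR q (β i) (γ i) := by
      have h₁ : d t + β i = ((β i - γ i + 1 : ℕ) : ℝ) := by
        simp only [d]; push_cast [hγβ i]; ring
      have h₂ : d t + γ i = 1 := by simp only [d]; ring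
      rw [h₁, h₂, Real.rpow_natCast, Real.rpow_one, qBinomR_eq_qPochR_div hq0.le hq1 (hγβ i)]
    simp [vertexLimitFactor, hconst]
  · have hslope : ((j : ℕ) - (i : ℕ) : ℝ) < 0 := sub_neg.mpr (Nat.cast_lt.mpr hji)
    have hd : Tendsto d atTop atBot :=
      tendsto_atBot_add_const_right _ _ (tendsto_id.atTop_mul_const_of_neg hslope)
    have hlim : (q ^ β j / q ^ γ j) ^ γ i = q ^ (γ i * (β j - γ j)) := by
      rw [div_eq_mul_inv, ← pow_sub₀ q hq0.ne' (hγβ j), ← pow_mul, mul_comm]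
    simpa [vertexLimitFactor, hji.ne', hji, hlim] using
      tendsto_qPochR_rpow_div_of_tendsto_atBot hq0 hq1 hd (β j) (γ j) (γ i)

theorem stmt_3_general (q : ℝ) (hq0 : 0 < q) (hq1 : q < 1)
    (n : ℕ) (m l : ℕ)
    (β γ : Fin (n + 1) → ℕ)
    (hγβ : ∀ i, γ i ≤ β i)
    (ct : Fin (n + 1) → ℤ)
    (c : ℝ → Fin (n + 1) → ℝ)
    (hc : ∀ t i, c t i = t * ((n + 1) - ((i : ℕ) + 1)) + ct i)
    (S : ℝ → ℝ)
    (hS : ∀ t, S t = (qBinomR q m l)⁻¹ *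
      ∏ i, ∏ j,
        qPochR q (q ^ (c t i - c t j - (γ i : ℝ) + (β j : ℝ) + 1)) (γ i) /
          qPochR q (q ^ (c t i - c t j - (γ i : ℝ) + (γ j : ℝ) + 1)) (γ i)) :
    Filter.Tendsto S Filter.atTop
      (nhds (q ^ (∑ p ∈ Finset.univ.filter (fun p : Fin (n+1) × Fin (n+1) => p.1 < p.2),
          (β p.1 - γ p.1) * γ p.2) *
        (qBinomR q m l)⁻¹ * ∏ i, qBinomR q (β i) (γ i))) := by
  have hdiff (t : ℝ) (i j : Fin (n + 1)) :
      c t i - c t j = t * ((j : ℕ) - (i : ℕ) : ℝ) + ((ct i : ℝ) - ct j) := by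
    rw [hc, hc]; ring
  have hprod := tendsto_finsetProd univ fun i _ => tendsto_finsetProd univ fun j _ =>
    tendsto_qPochR_ratio_vertexLimitFactor hq0 hq1 β γ hγβ c (fun i => (ct i : ℝ)) hdiff i j
  rw [prod_prod_vertexLimitFactor] at hprod
  rw [funext hS, mul_comm _ (qBinomR q m l)⁻¹, mul_assoc]
  exact hprod.const_mul _

/-- the vertex-model limit (Proposition 4 of the paper).
Here `q ∈ (0,1)` is real, `c i = t(n+1-i) + c̃ i` with integers `c̃ i`, and
`q ^ c` denotes `Real.rpow`. -/
theorem stmt_3 (q : ℝ) (hq0 : 0 < q) (hq1 : q < 1)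
    (n : ℕ) (m l : ℕ) (hl : l ≤ m)
    (β γ : Fin (n + 1) → ℕ) (hβ : ∑ i, β i = m) (hγ : ∑ i, γ i = l)
    (hγβ : ∀ i, γ i ≤ β i)
    (ct : Fin (n + 1) → ℤ)
    (c : ℝ → Fin (n + 1) → ℝ)
    (hc : ∀ t i, c t i = t * ((n + 1) - ((i : ℕ) + 1)) + ct i)
    (S : ℝ → ℝ)
    (hS : ∀ t, S t = (qBinomR q m l)⁻¹ *
      ∏ i, ∏ j,
        qPochR q (q ^ (c t i - c t j - (γ i : ℝ) + (β j : ℝ) + 1)) (γ i) /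
          qPochR q (q ^ (c t i - c t j - (γ i : ℝ) + (γ j : ℝ) + 1)) (γ i)) :
    Filter.Tendsto S Filter.atTop
      (nhds (q ^ (∑ p ∈ Finset.univ.filter (fun p : Fin (n+1) × Fin (n+1) => p.1 < p.2),
          (β p.1 - γ p.1) * γ p.2) *
        (qBinomR q m l)⁻¹ * ∏ i, qBinomR q (β i) (γ i))) :=
  stmt_3_general q hq0 hq1 n m l β γ hγβ ct c hc S hS
end

section
/- Let $b_1, b_2, c_1, c_2$ be generic real numbers and $s = (c_1 - b_1) + (c_2 - b_2)$. Then $$\sin\pi(z+c_1-s)\frac{\sin\pi(z+c_2)}{\sin\pi(c_1-c_2)}\sin\pi(c_1-b_1)\sin\pi(c_1-b_2) + \sin\pi(z+c_2-s)\frac{\sin\pi(z+c_1)}{\sin\pi(c_2-c_1)}\sin\pi(c_2-b_1)\sin\pi(c_2-b_2) = \sin(\pi s)\sin\pi(z+b_1)\sin\pi(z+b_2)$$ for all real $z$, provided $c_1 - c_2 \notin \mathbb{Z}$. -/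
/-!
Writing `sin x = (u - u⁻¹) / (2i)` with `u = exp (i x)` turns the identity, once multiplied by
`sin π(c₁ - c₂)`, into an identity between Laurent polynomials in the exponentials of
`z, b₁, b₂, c₁, c₂`, which is checked by clearing denominators.
-/

set_option autoImplicit false

open Real

theorem Complex.sin_interpolation_identity (z b₁ b₂ c₁ c₂ : ℂ) :
    Complex.sin (z - c₂ + b₁ + b₂) * Complex.sin (z + c₂) *
          Complex.sin (c₁ - b₁) * Complex.sin (c₁ - b₂) -
        Complex.sin (z - c₁ + b₁ + b₂) * Complex.sin (z + c₁) *
          Complex.sin (c₂ - b₁) * Complex.sin (c₂ - b₂) =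
      Complex.sin (c₁ - c₂) * Complex.sin (c₁ + c₂ - b₁ - b₂) *
        Complex.sin (z + b₁) * Complex.sin (z + b₂) := by
  simp only [Complex.sin, add_mul, sub_mul, neg_add, neg_sub, neg_mul,
    Complex.exp_add, Complex.exp_sub, Complex.exp_neg]
  field_simp
  ring

theorem Real.sin_interpolation_identity (z b₁ b₂ c₁ c₂ : ℝ) :
    sin (z - c₂ + b₁ + b₂) * sin (z + c₂) * sin (c₁ - b₁) * sin (c₁ - b₂) -
        sin (z - c₁ + b₁ + b₂) * sin (z + c₁) * sin (c₂ - b₁) * sin (c₂ - b₂) =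
      sin (c₁ - c₂) * sin (c₁ + c₂ - b₁ - b₂) * sin (z + b₁) * sin (z + b₂) := by
  apply Complex.ofReal_injective
  push_cast
  exact Complex.sin_interpolation_identity z b₁ b₂ c₁ c₂

theorem Real.sin_pi_mul_ne_zero {x : ℝ} (hx : ∀ k : ℤ, x ≠ k) : sin (π * x) ≠ 0 := by
  rw [Ne, sin_eq_zero_iff]
  rintro ⟨k, hk⟩
  exact hx k (mul_left_cancel₀ pi_ne_zero (by rw [← hk, mul_comm])).symm

/-- the `n = 2` trigonometric case of the interpolation identity
(Lemma 2 of the paper). -/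
theorem stmt_5 (b₁ b₂ c₁ c₂ : ℝ) (s : ℝ) (hs : s = (c₁ - b₁) + (c₂ - b₂))
    (hgen : ∀ k : ℤ, c₁ - c₂ ≠ k) (z : ℝ) :
    Real.sin (π * (z + c₁ - s)) * (Real.sin (π * (z + c₂)) / Real.sin (π * (c₁ - c₂))) *
        Real.sin (π * (c₁ - b₁)) * Real.sin (π * (c₁ - b₂)) +
      Real.sin (π * (z + c₂ - s)) * (Real.sin (π * (z + c₁)) / Real.sin (π * (c₂ - c₁))) *
        Real.sin (π * (c₂ - b₁)) * Real.sin (π * (c₂ - b₂)) =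
      Real.sin (π * s) * Real.sin (π * (z + b₁)) * Real.sin (π * (z + b₂)) := by
  subst hs
  have hsin := sin_pi_mul_ne_zero hgen
  rw [show π * (c₂ - c₁) = -(π * (c₁ - c₂)) by ring, sin_neg]
  field_simp
  linear_combination (norm := ring_nf)
    sin_interpolation_identity (π * z) (π * b₁) (π * b₂) (π * c₁) (π * c₂)
end

section
/- Let $q$ be a nonzero complex number, not a root of unity. Let $m \geq 1$, let $\beta \in \mathbb{Z}_{\geq 0}^{n+1}$ with $|\beta| = m$, and let $c_1,\dots,c_{n+1}$ be generic. Then for $l = 1$: $$[m] = \sum_{\nu:\ \beta_\nu \geq 1} [\beta_\nu] \prod_{j \neq \nu} \frac{[c_\nu - c_j + \beta_j]}{[c_\nu - c_j]},$$ where $[u] = q^{u/2} - q^{-u/2}$ and the sum runs over $\nu \in \{1,\dots,n+1\}$ with $\beta_\nu \geq 1$. -/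
set_option autoImplicit false

open Complex Real

section Aux
open Polynomial Finset

lemma key_s8 (N : ℕ) (x t : Fin N → ℂ) (hx0 : ∀ i, x i ≠ 0)
    (hinj : Function.Injective x) :
    (∏ j, t j) - 1 = ∑ ν : Fin N, (t ν - 1) *
      ∏ j ∈ Finset.univ.erase ν, (x ν * t j - x j) / (x ν - x j) := by
  set P : ℂ[X] := ∏ j, (C (t j) * X - C (x j)) with hP
  set Q : ℂ[X] := C (∏ j, t j) * ∏ j, (X - C (x j)) with hQ
  have hinjOn : Set.InjOn x (Finset.univ : Finset (Fin N)) := fun a _ b _ h => hinj h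
  -- degree bound
  have hdeg : (P - Q).degree < (Finset.univ : Finset (Fin N)).card := by
    rw [Polynomial.degree_lt_iff_coeff_zero]
    intro k hk
    simp only [card_univ, Fintype.card_fin, Nat.cast_le] at hk
    obtain rfl | h := hk.eq_or_lt
    · have h1 : P.coeff N = ∏ j, t j := by
        have := Polynomial.coeff_prod_of_natDegree_le (s := (univ : Finset (Fin N)))
          (fun j => C (t j) * X - C (x j)) 1 ?_
        · simpa using this
        · intro p _
          exact (Polynomial.natDegree_sub_le _ _).trans (by simp [Polynomial.natDegree_mul_le.trans (by simp : (C (t p)).natDegree + (X:ℂ[X]).natDegree ≤ 1)])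
      have h2 : (∏ j, (X - C (x j)) : ℂ[X]).coeff N = 1 := by
        have := Polynomial.coeff_prod_of_natDegree_le (s := (univ : Finset (Fin N)))
          (fun j => X - C (x j)) 1 ?_
        · simpa using this
        · intro p _
          exact (Polynomial.natDegree_sub_le _ _).trans (by simp)
      rw [Polynomial.coeff_sub, hQ, Polynomial.coeff_C_mul, h1, h2, mul_one, sub_self]
    · have hP' : P.degree < k := by
        apply lt_of_le_of_lt _ (by exact_mod_cast Nat.cast_lt.mpr h : (N : WithBot ℕ) < k)
        apply (Polynomial.degree_prod_le _ _).trans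
        calc ∑ j : Fin N, (C (t j) * X - C (x j)).degree ≤ ∑ j : Fin N, (1 : WithBot ℕ) := by
              apply Finset.sum_le_sum
              intro j _
              exact (Polynomial.degree_sub_le _ _).trans (by
                simp only [sup_le_iff]
                constructor
                · exact (Polynomial.degree_mul_le _ _).trans (by
                    rw [Polynomial.degree_X]
                    calc (C (t j)).degree + 1 ≤ 0 + 1 := by
                          exact add_le_add Polynomial.degree_C_le le_rfl
                      _ = 1 := by norm_num)
                · exact Polynomial.degree_C_le.trans (by norm_num))
          _ ≤ N := by simp
      have hQ' : Q.degree < k := by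
        apply lt_of_le_of_lt _ (by exact_mod_cast Nat.cast_lt.mpr h : (N : WithBot ℕ) < k)
        apply (Polynomial.degree_mul_le _ _).trans
        have : (∏ j, (X - C (x j)) : ℂ[X]).degree ≤ N := by
          apply (Polynomial.degree_prod_le _ _).trans
          calc ∑ j : Fin N, (X - C (x j)).degree ≤ ∑ j : Fin N, (1 : WithBot ℕ) := by
                apply Finset.sum_le_sum
                intro j _
                exact Polynomial.degree_X_sub_C_le _
            _ ≤ N := by simp
        calc (C (∏ j, t j)).degree + (∏ j, (X - C (x j)) : ℂ[X]).degree
            ≤ 0 + N := add_le_add Polynomial.degree_C_le this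
          _ = N := by simp
      rw [Polynomial.coeff_sub,
        Polynomial.coeff_eq_zero_of_degree_lt hP', Polynomial.coeff_eq_zero_of_degree_lt hQ',
        sub_zero]
  have hint := Lagrange.eq_interpolate (v := x) hinjOn hdeg
  -- evaluate at 0
  have hev := congrArg (Polynomial.eval 0) hint
  rw [Lagrange.interpolate_apply, Polynomial.eval_finset_sum] at hev
  set A : ℂ := ∏ j, (-(x j)) with hA
  have hA0 : A ≠ 0 := Finset.prod_ne_zero_iff.mpr fun j _ => neg_ne_zero.mpr (hx0 j)
  have hevP : P.eval 0 = A := by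
    rw [hP, Polynomial.eval_prod]; simp [hA]
  have hevQ : Q.eval 0 = (∏ j, t j) * A := by
    rw [hQ, Polynomial.eval_mul, Polynomial.eval_C, Polynomial.eval_prod]; simp [hA]
  have hQx : ∀ ν : Fin N, Q.eval (x ν) = 0 := by
    intro ν
    rw [hQ, Polynomial.eval_mul, Polynomial.eval_prod]
    apply mul_eq_zero_of_right
    exact Finset.prod_eq_zero (Finset.mem_univ ν) (by simp)
  have hPx : ∀ ν : Fin N, P.eval (x ν)
      = x ν * (t ν - 1) * ∏ j ∈ Finset.univ.erase ν, (t j * x ν - x j) := by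
    intro ν
    rw [hP, Polynomial.eval_prod]
    simp only [Polynomial.eval_sub, Polynomial.eval_mul, Polynomial.eval_C, Polynomial.eval_X]
    rw [← Finset.mul_prod_erase _ _ (Finset.mem_univ ν)]
    ring
  have hbasis : ∀ ν : Fin N, (Lagrange.basis Finset.univ x ν).eval 0
      = ∏ j ∈ Finset.univ.erase ν, ((x ν - x j)⁻¹ * (-(x j))) := by
    intro ν
    rw [Lagrange.basis, Polynomial.eval_prod]
    apply Finset.prod_congr rfl
    intro j _
    simp [Lagrange.basisDivisor]
  have hxne : ∀ ν j : Fin N, j ≠ ν → x ν - x j ≠ 0 := by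
    intro ν j hj
    exact sub_ne_zero.mpr fun h => hj (hinj h.symm)
  have hterm : ∀ ν : Fin N,
      (C ((P - Q).eval (x ν)) * Lagrange.basis Finset.univ x ν).eval 0
      = A * (-((t ν - 1) * ∏ j ∈ Finset.univ.erase ν, (x ν * t j - x j) / (x ν - x j))) := by
    intro ν
    rw [Polynomial.eval_mul, Polynomial.eval_C, Polynomial.eval_sub, hQx, sub_zero, hPx, hbasis]
    have hAsplit : A = (-(x ν)) * ∏ j ∈ Finset.univ.erase ν, (-(x j)) := by
      rw [hA]; exact (Finset.mul_prod_erase _ _ (Finset.mem_univ ν)).symm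
    rw [hAsplit, Finset.prod_mul_distrib]
    have hr : ∏ j ∈ Finset.univ.erase ν, (x ν * t j - x j) / (x ν - x j)
        = (∏ j ∈ Finset.univ.erase ν, (t j * x ν - x j)) *
          ∏ j ∈ Finset.univ.erase ν, (x ν - x j)⁻¹ := by
      rw [← Finset.prod_mul_distrib]
      exact Finset.prod_congr rfl fun j _ => by rw [div_eq_mul_inv, mul_comm (x ν) (t j)]
    rw [hr]
    ring
  rw [Finset.sum_congr rfl (fun ν _ => hterm ν), ← Finset.mul_sum,
    Polynomial.eval_sub, hevP, hevQ, Finset.sum_neg_distrib] at hev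
  have h2 : A * (1 - ∏ j, t j) = A * (-(∑ ν : Fin N, (t ν - 1) *
      ∏ j ∈ Finset.univ.erase ν, (x ν * t j - x j) / (x ν - x j))) := by
    linear_combination hev
  have h3 := mul_left_cancel₀ hA0 h2
  linear_combination -h3

end Aux

/-- the `l = 1` case of the sum-to-1 identity for the trigonometric
`A_n^{(1)}` face model.  Here `[u] = q^{u/2} - q^{-u/2}` with a fixed square root
of `q`, realized by writing `q = e^κ` and `[u] = e^{κu/2} - e^{-κu/2}`. -/
theorem stmt_8 (κ : ℂ) (q : ℂ) (hq : q = Complex.exp κ)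
    (hqroot : ∀ k : ℕ, 1 ≤ k → Complex.exp ((k : ℂ) * κ) ≠ 1)
    (br : ℂ → ℂ) (hbr : ∀ u, br u = Complex.exp (κ * u / 2) - Complex.exp (-(κ * u / 2)))
    (n : ℕ) (m : ℕ) (hm : 1 ≤ m)
    (β : Fin (n + 1) → ℕ) (hβ : ∑ i, β i = m)
    (c : Fin (n + 1) → ℂ)
    (hgen : ∀ ν j, ν ≠ j → br (c ν - c j) ≠ 0) :
    br m = ∑ ν ∈ Finset.univ.filter (fun ν => 1 ≤ β ν),
      br (β ν) * ∏ j ∈ Finset.univ.erase ν, br (c ν - c j + β j) / br (c ν - c j) := by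
  set x : Fin (n + 1) → ℂ := fun i => Complex.exp (κ * c i) with hx
  set t : Fin (n + 1) → ℂ := fun i => Complex.exp (κ * (β i : ℂ)) with ht
  set a : Fin (n + 1) → ℂ := fun i => Complex.exp (κ * c i / 2) with ha
  set e : Fin (n + 1) → ℂ := fun i => Complex.exp (κ * (β i : ℂ) / 2) with he
  have hexp : ∀ z : ℂ, Complex.exp z ≠ 0 := Complex.exp_ne_zero
  have hxa : ∀ i, x i = a i * a i := by
    intro i; rw [hx, ha, ← Complex.exp_add]; ring_nf
  have hte : ∀ i, t i = e i * e i := by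
    intro i; rw [ht, he, ← Complex.exp_add]; ring_nf
  have hinj : Function.Injective x := by
    intro i j hij
    by_contra hne
    apply hgen i j hne
    rw [hbr]
    set w : ℂ := Complex.exp (κ * (c i - c j) / 2) with hw
    have hw2 : w * w = 1 := by
      have h5 : κ * (c i - c j) / 2 + κ * (c i - c j) / 2 = κ * c i - κ * c j := by ring
      rw [hw, ← Complex.exp_add, h5, Complex.exp_sub,
        show Complex.exp (κ * c i) = x i from rfl,
        show Complex.exp (κ * c j) = x j from rfl, hij]
      exact div_self (hexp _)
    have hwinv : Complex.exp (-(κ * (c i - c j) / 2)) = w⁻¹ := by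
      rw [hw, ← Complex.exp_neg]
    rw [hwinv]
    rw [inv_eq_of_mul_eq_one_left hw2, sub_self]
  have hx0 : ∀ i, x i ≠ 0 := fun i => hexp _
  have hxsub : ∀ ν j : Fin (n+1), ν ≠ j → x ν - x j ≠ 0 := by
    intro ν j hne
    exact sub_ne_zero.mpr fun h => hne (hinj h)
  -- per-factor identity
  have hfac : ∀ ν j : Fin (n+1), ν ≠ j →
      br (c ν - c j + β j) / br (c ν - c j)
        = (e j)⁻¹ * ((x ν * t j - x j) / (x ν - x j)) := by
    intro ν j hne
    rw [mul_div_assoc' ((e j)⁻¹) _ _]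
    rw [div_eq_div_iff (hgen ν j hne) (hxsub ν j hne)]
    have h1 : br (c ν - c j + (β j : ℂ))
        = a ν * (a j)⁻¹ * e j - (a ν * (a j)⁻¹ * e j)⁻¹ := by
      rw [hbr]
      have h2 : κ * (c ν - c j + (β j : ℂ)) / 2
          = (κ * c ν / 2 - κ * c j / 2) + κ * (β j : ℂ) / 2 := by ring
      simp only [h2, Complex.exp_neg, Complex.exp_add, Complex.exp_sub, div_eq_mul_inv, ha, he]
    have h3 : br (c ν - c j) = a ν * (a j)⁻¹ - (a ν * (a j)⁻¹)⁻¹ := by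
      rw [hbr]
      have h4 : κ * (c ν - c j) / 2 = κ * c ν / 2 - κ * c j / 2 := by ring
      simp only [h4, Complex.exp_neg, Complex.exp_sub, div_eq_mul_inv, ha]
    rw [h1, h3, hxa, hxa, hte]
    have hA : a ν ≠ 0 := hexp _
    have hB : a j ≠ 0 := hexp _
    have hD : e j ≠ 0 := hexp _
    field_simp
  rw [Finset.sum_filter_of_ne (by
    intro ν _ h
    by_contra hb
    apply h
    have hb0 : β ν = 0 := by omega
    rw [hb0]
    simp [hbr])]
  have hterm : ∀ ν : Fin (n+1),
      br (β ν) * ∏ j ∈ Finset.univ.erase ν, br (c ν - c j + β j) / br (c ν - c j)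
      = (∏ j, e j)⁻¹ * ((t ν - 1) *
          ∏ j ∈ Finset.univ.erase ν, (x ν * t j - x j) / (x ν - x j)) := by
    intro ν
    have h1 : ∏ j ∈ Finset.univ.erase ν, br (c ν - c j + β j) / br (c ν - c j)
        = (∏ j ∈ Finset.univ.erase ν, (e j)⁻¹) *
          ∏ j ∈ Finset.univ.erase ν, (x ν * t j - x j) / (x ν - x j) := by
      rw [← Finset.prod_mul_distrib]
      exact Finset.prod_congr rfl fun j hj => hfac ν j (Finset.ne_of_mem_erase hj).symm
    have h2 : br (β ν) = (e ν)⁻¹ * (t ν - 1) := by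
      rw [hbr, Complex.exp_neg,
        show Complex.exp (κ * (β ν : ℂ) / 2) = e ν from rfl, hte ν]
      have hD : e ν ≠ 0 := hexp _
      field_simp
    rw [h1, h2,
      show (∏ j, e j) = e ν * ∏ j ∈ Finset.univ.erase ν, e j from
        (Finset.mul_prod_erase _ _ (Finset.mem_univ ν)).symm,
      mul_inv, ← Finset.prod_inv_distrib]
    ring
  rw [Finset.sum_congr rfl (fun ν _ => hterm ν), ← Finset.mul_sum,
    ← key_s8 (n+1) x t hx0 hinj]
  have hE : ∏ j, e j = Complex.exp (κ * (m : ℂ) / 2) := by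
    rw [he, ← Complex.exp_sum]
    congr 1
    rw [← Finset.sum_div, ← Finset.mul_sum, ← Nat.cast_sum, hβ]
  have hT : ∏ j, t j = Complex.exp (κ * (m : ℂ)) := by
    rw [ht, ← Complex.exp_sum]
    congr 1
    rw [← Finset.mul_sum, ← Nat.cast_sum, hβ]
  rw [hE, hT, hbr, Complex.exp_neg,
    show κ * (m : ℂ) = κ * (m : ℂ) / 2 + κ * (m : ℂ) / 2 by ring, Complex.exp_add]
  have hE0 : Complex.exp (κ * (m : ℂ) / 2) ≠ 0 := hexp _
  field_simp
  rw [show κ * (m : ℂ) * (1 + 1) / 2 ^ 2 = κ * (m : ℂ) / 2 by ring]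
end

section
/- Let $q$ be a nonzero complex number, not a root of unity, $l \in \mathbb{Z}_{\geq 0}$, and define $F_2$ as the double sum $F_2(w_1, w_2 \mid z_1, z_2) = \sum_{\gamma_1+\gamma_2=l} q^{(\gamma_1^2+\gamma_2^2)/2}\frac{(w_1;q)_{\gamma_1}(w_2;q)_{\gamma_2}}{(q;q)_{\gamma_1}(q;q)_{\gamma_2}}\frac{(z_2w_2/z_1;q)_{\gamma_1}(z_1w_1/z_2;q)_{\gamma_2}}{(q^{-\gamma_2}z_2/z_1;q)_{\gamma_1}(q^{-\gamma_1}z_1/z_2;q)_{\gamma_2}}$. Then $F_2$ satisfies the 'gauge' symmetry $$F_2(w_1, w_2 \mid z_1, z_2) = F_2\Big(\frac{z_2 w_2}{z_1}, \frac{z_1 w_1}{z_2} \,\Big|\, z_1, z_2\Big)$$ for generic $z_1, z_2$ with $z_1/z_2 \notin q^{\mathbb{Z}}$. -/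
set_option autoImplicit false

/-- `F₂(w₁,w₂|z₁,z₂)`, with `r` a fixed square root of `q`. -/
noncomputable def F2 (q r : ℂ) (l : ℕ) (w₁ w₂ z₁ z₂ : ℂ) : ℂ :=
  ∑ γ₁ ∈ Finset.range (l + 1),
    r ^ (γ₁ ^ 2 + (l - γ₁) ^ 2) *
      (qPoch q w₁ γ₁ * qPoch q w₂ (l - γ₁)) / (qPoch q q γ₁ * qPoch q q (l - γ₁)) *
      ((qPoch q (z₂ * w₂ / z₁) γ₁ * qPoch q (z₁ * w₁ / z₂) (l - γ₁)) /
        (qPoch q (q ^ (-((l - γ₁ : ℕ) : ℤ)) * z₂ / z₁) γ₁ *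
          qPoch q (q ^ (-(γ₁ : ℤ)) * z₁ / z₂) (l - γ₁)))

/-- the gauge symmetry
`F₂(w₁,w₂|z₁,z₂) = F₂(z₂w₂/z₁, z₁w₁/z₂ | z₁,z₂)`. -/
theorem stmt_13 (q r : ℂ) (hq0 : q ≠ 0) (hr : r ^ 2 = q)
    (hqroot : ∀ k : ℕ, 1 ≤ k → q ^ k ≠ 1)
    (l : ℕ) (w₁ w₂ z₁ z₂ : ℂ) (hz₁ : z₁ ≠ 0) (hz₂ : z₂ ≠ 0)
    (hgen : ∀ k : ℤ, z₁ / z₂ ≠ q ^ k) :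
    F2 q r l w₁ w₂ z₁ z₂ = F2 q r l (z₂ * w₂ / z₁) (z₁ * w₁ / z₂) z₁ z₂ := by
  unfold F2
  refine Finset.sum_congr rfl fun γ₁ _ => ?_
  have h1 : z₂ * (z₁ * w₁ / z₂) / z₁ = w₁ := by field_simp
  have h2 : z₁ * (z₂ * w₂ / z₁) / z₂ = w₂ := by field_simp
  rw [h1, h2]
  ring
end
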